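/- Let F = {log f_n} be a sequence of positive continuous functions with bounded variation on a one-sided subshift X that is subadditive and quasi-multiplicative (satisfies conditions (C1) and (C2)). Then X is balanced with respect to F. -/
import Mathlib


open scoped Classical BigOperators
open Filter MeasureTheory

namespace Paper

/-- Points of the full one-sided shift over `k` symbols. -/
abbrev Pt (k : ℕ) := ℕ → Fin k

variable {k : ℕ}

/-- The one-sided shift map. -/
def shift (x : Pt k) : Pt k := fun n => x (n + 1)

/-- A one-sided subshift: a closed shift-invariant subset. -/
def IsSubshift (X : Set (Pt k)) : Prop := IsClosed X ∧ ∀ x ∈ X, shift x ∈ X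

/-- The cylinder set `[u]` of a word `u` of length `n` inside `X`. -/
def cylinder (X : Set (Pt k)) {n : ℕ} (u : Fin n → Fin k) : Set (Pt k) :=
  {x | x ∈ X ∧ ∀ i : Fin n, x (i : ℕ) = u i}

/-- A word is allowable if its cylinder in `X` is nonempty. -/
def Allowable (X : Set (Pt k)) {n : ℕ} (u : Fin n → Fin k) : Prop :=
  (cylinder X u).Nonempty

/-- `B_n(X)`: the finite set of allowable words of length `n`. -/
noncomputable def words (X : Set (Pt k)) (n : ℕ) : Finset (Fin n → Fin k) :=
  Finset.univ.filter fun u => Allowable X u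

/-- `F_n(u)`: words `v` of length `n` with `uv` allowable. -/
noncomputable def Fext (X : Set (Pt k)) {m : ℕ} (u : Fin m → Fin k) (n : ℕ) :
    Finset (Fin n → Fin k) :=
  Finset.univ.filter fun v => Allowable X (Fin.append u v)

/-- `P_n(u)`: words `v` of length `n` with `vu` allowable. -/
noncomputable def Pext (X : Set (Pt k)) {m : ℕ} (u : Fin m → Fin k) (n : ℕ) :
    Finset (Fin n → Fin k) :=
  Finset.univ.filter fun v => Allowable X (Fin.append v u)

/-- `F = {log f_n}` is a sequence of positive continuous functions on `X`. -/
def GoodSeq (X : Set (Pt k)) (f : ℕ → Pt k → ℝ) : Prop :=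
  ∀ n, ContinuousOn (f n) X ∧ ∀ x ∈ X, 0 < f n x

/-- The right balanced condition with constant `C` and threshold `K`. -/
def RightBalancedWith (X : Set (Pt k)) (f : ℕ → Pt k → ℝ) (C : ℝ) (K : ℕ) : Prop :=
  ∀ m n : ℕ, 0 < m → K ≤ n → ∀ u : Fin m → Fin k, u ∈ words X m →
    ∀ xu ∈ cylinder X u,
    ∀ y : (Fin n → Fin k) → Pt k,
      (∀ v ∈ Fext X u n, y v ∈ cylinder X (Fin.append u v)) →
    ∀ z : (Fin n → Fin k) → Pt k,
      (∀ w ∈ words X n, z w ∈ cylinder X w) →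
      1 / C ≤ (∑ v ∈ Fext X u n, f (m + n) (y v)) /
          (f m xu * ∑ w ∈ words X n, f n (z w)) ∧
      (∑ v ∈ Fext X u n, f (m + n) (y v)) /
          (f m xu * ∑ w ∈ words X n, f n (z w)) ≤ C

/-- The left balanced condition with constant `C` and threshold `K`. -/
def LeftBalancedWith (X : Set (Pt k)) (f : ℕ → Pt k → ℝ) (C : ℝ) (K : ℕ) : Prop :=
  ∀ m n : ℕ, 0 < m → K ≤ n → ∀ u : Fin m → Fin k, u ∈ words X m →
    ∀ xu ∈ cylinder X u,
    ∀ y : (Fin n → Fin k) → Pt k,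
      (∀ v ∈ Pext X u n, y v ∈ cylinder X (Fin.append v u)) →
    ∀ z : (Fin n → Fin k) → Pt k,
      (∀ w ∈ words X n, z w ∈ cylinder X w) →
      1 / C ≤ (∑ v ∈ Pext X u n, f (n + m) (y v)) /
          (f m xu * ∑ w ∈ words X n, f n (z w)) ∧
      (∑ v ∈ Pext X u n, f (n + m) (y v)) /
          (f m xu * ∑ w ∈ words X n, f n (z w)) ≤ C

def RightBalanced (X : Set (Pt k)) (f : ℕ → Pt k → ℝ) : Prop :=
  ∃ C : ℝ, 1 ≤ C ∧ ∃ K : ℕ, 1 ≤ K ∧ RightBalancedWith X f C K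

def LeftBalanced (X : Set (Pt k)) (f : ℕ → Pt k → ℝ) : Prop :=
  ∃ C : ℝ, 1 ≤ C ∧ ∃ K : ℕ, 1 ≤ K ∧ LeftBalancedWith X f C K

def Balanced (X : Set (Pt k)) (f : ℕ → Pt k → ℝ) : Prop :=
  RightBalanced X f ∧ LeftBalanced X f

/-- Boundedly supermultiplicative with constant `C` and threshold `K`. -/
def BSMWith (X : Set (Pt k)) (f : ℕ → Pt k → ℝ) (C : ℝ) (K : ℕ) : Prop :=
  ∀ m n : ℕ, 0 < m → K ≤ n →
    ∀ a : (Fin m → Fin k) → Pt k, (∀ u ∈ words X m, a u ∈ cylinder X u) →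
    ∀ b : (Fin n → Fin k) → Pt k, (∀ v ∈ words X n, b v ∈ cylinder X v) →
    ∀ c : (Fin (m + n) → Fin k) → Pt k, (∀ w ∈ words X (m + n), c w ∈ cylinder X w) →
      1 / C ≤ ((∑ u ∈ words X m, f m (a u)) * (∑ v ∈ words X n, f n (b v))) /
          (∑ w ∈ words X (m + n), f (m + n) (c w)) ∧
      ((∑ u ∈ words X m, f m (a u)) * (∑ v ∈ words X n, f n (b v))) /
          (∑ w ∈ words X (m + n), f (m + n) (c w)) ≤ C

def BSM (X : Set (Pt k)) (f : ℕ → Pt k → ℝ) : Prop :=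
  ∃ C : ℝ, 1 ≤ C ∧ ∃ K : ℕ, 1 ≤ K ∧ BSMWith X f C K

/-- The Gibbs inequality for `μ` with pressure constant `P` and constant `C`. -/
def GibbsWith (X : Set (Pt k)) (f : ℕ → Pt k → ℝ) (μ : Measure (Pt k)) (P C : ℝ) : Prop :=
  ∀ n : ℕ, 0 < n → ∀ u : Fin n → Fin k, u ∈ words X n → ∀ x ∈ cylinder X u,
    1 / C ≤ (μ (cylinder X u)).toReal / (Real.exp (-(n : ℝ) * P) * f n x) ∧
    (μ (cylinder X u)).toReal / (Real.exp (-(n : ℝ) * P) * f n x) ≤ C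

/-- `μ` is a (Borel probability) Gibbs measure on `X` for the sequence `f`. -/
def IsGibbs (X : Set (Pt k)) (f : ℕ → Pt k → ℝ) (μ : Measure (Pt k)) : Prop :=
  IsProbabilityMeasure μ ∧ μ Xᶜ = 0 ∧ ∃ P C : ℝ, 0 < C ∧ GibbsWith X f μ P C

/-- Shift invariance of a measure. -/
def InvariantM (μ : Measure (Pt k)) : Prop :=
  ∀ s : Set (Pt k), MeasurableSet s → μ (shift ⁻¹' s) = μ s

/-- Ergodicity of a measure with respect to the shift. -/
def ErgodicM (μ : Measure (Pt k)) : Prop :=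
  ∀ s : Set (Pt k), MeasurableSet s → shift ⁻¹' s = s → μ s = 0 ∨ μ s = 1

/-- Subadditivity of the sequence with constant `C`. -/
def SubaddWith (X : Set (Pt k)) (f : ℕ → Pt k → ℝ) (C : ℝ) : Prop :=
  0 ≤ C ∧ ∀ x ∈ X, ∀ m n : ℕ, f (m + n) x ≤ Real.exp C * (f m x * f n (shift^[m] x))

def Subadditive (X : Set (Pt k)) (f : ℕ → Pt k → ℝ) : Prop := ∃ C, SubaddWith X f C

/-- Superadditivity of the sequence with constant `C`. -/
def SuperaddWith (X : Set (Pt k)) (f : ℕ → Pt k → ℝ) (C : ℝ) : Prop :=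
  0 ≤ C ∧ ∀ x ∈ X, ∀ m n : ℕ, Real.exp (-C) * (f m x * f n (shift^[m] x)) ≤ f (m + n) x

def Superadditive (X : Set (Pt k)) (f : ℕ → Pt k → ℝ) : Prop := ∃ C, SuperaddWith X f C

/-- Bounded variation with constant `M`. -/
def BddVarWith (X : Set (Pt k)) (f : ℕ → Pt k → ℝ) (M : ℝ) : Prop :=
  1 ≤ M ∧ ∀ n : ℕ, ∀ x ∈ X, ∀ y ∈ X, (∀ i < n, x i = y i) → f n x / f n y ≤ M

def BddVar (X : Set (Pt k)) (f : ℕ → Pt k → ℝ) : Prop := ∃ M, BddVarWith X f M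

/-- The partition sums `Z_n(F)`. -/
noncomputable def Zn (X : Set (Pt k)) (f : ℕ → Pt k → ℝ) (n : ℕ) : ℝ :=
  ∑ u ∈ words X n, sSup (f n '' cylinder X u)

/-- The topological pressure `P(F) = limsup (1/n) log Z_n(F)`. -/
noncomputable def pressure (X : Set (Pt k)) (f : ℕ → Pt k → ℝ) : ℝ :=
  Filter.limsup (fun n : ℕ => Real.log (Zn X f n) / n) atTop

/-- Condition (C2): quasi-multiplicativity. -/
def QuasiMult (X : Set (Pt k)) (f : ℕ → Pt k → ℝ) : Prop :=
  ∃ k₀ : ℕ, ∃ D : ℝ, 0 < D ∧ D < 1 ∧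
    ∀ (m n : ℕ) (u : Fin m → Fin k) (v : Fin n → Fin k),
      Allowable X u → Allowable X v →
      ∃ i, i ≤ k₀ ∧ ∃ w : Fin i → Fin k,
        Allowable X (Fin.append (Fin.append u w) v) ∧
        D * sSup (f m '' cylinder X u) * sSup (f n '' cylinder X v) ≤
          sSup (f (m + i + n) '' cylinder X (Fin.append (Fin.append u w) v))

/-- Strong specification property with specification number `s`. -/
def StrongSpec (X : Set (Pt k)) (s : ℕ) : Prop :=
  ∀ (m n : ℕ) (u : Fin m → Fin k) (v : Fin n → Fin k),
    Allowable X u → Allowable X v →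
    ∃ w : Fin s → Fin k, Allowable X (Fin.append (Fin.append u w) v)

/-- Irreducibility of a subshift. -/
def IrreducibleShift (X : Set (Pt k)) : Prop :=
  ∀ (m n : ℕ) (u : Fin m → Fin k) (v : Fin n → Fin k),
    Allowable X u → Allowable X v →
    ∃ (l : ℕ) (w : Fin l → Fin k), Allowable X (Fin.append (Fin.append u w) v)

/-- The `n`-th partition entropy of `μ`. -/
noncomputable def Hn (X : Set (Pt k)) (μ : Measure (Pt k)) (n : ℕ) : ℝ :=
  -∑ u ∈ words X n, (μ (cylinder X u)).toReal * Real.log (μ (cylinder X u)).toReal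

/-- Measure-theoretic entropy of an invariant measure on a subshift. -/
noncomputable def entropy (X : Set (Pt k)) (μ : Measure (Pt k)) : ℝ :=
  ⨅ n : ℕ, Hn X μ (n + 1) / (n + 1)

/-- The key partition-sum bound appearing in Lemma 2.2. -/
def KeyBound (X : Set (Pt k)) (f : ℕ → Pt k → ℝ) (C P : ℝ) : Prop :=
  ∀ n : ℕ, 0 < n → ∀ z : (Fin n → Fin k) → Pt k,
    (∀ u ∈ words X n, z u ∈ cylinder X u) →
    1 / C ≤ Real.exp ((n : ℝ) * P) / (∑ u ∈ words X n, f n (z u)) ∧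
    Real.exp ((n : ℝ) * P) / (∑ u ∈ words X n, f n (z u)) ≤ C


section Helpers

variable {X : Set (Pt k)} {f : ℕ → Pt k → ℝ}

lemma shift_iter (x : Pt k) (m n : ℕ) : shift^[m] x n = x (n + m) := by
  induction m generalizing x n with
  | zero => rfl
  | succ m ih =>
    rw [Function.iterate_succ_apply, ih]
    rfl

lemma shift_iter_mem (hX : IsSubshift X) {x : Pt k} (hx : x ∈ X) (m : ℕ) :
    shift^[m] x ∈ X := by
  induction m with
  | zero => exact hx
  | succ m ih => rw [Function.iterate_succ_apply']; exact hX.2 _ ih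

lemma append_cyl_left {m n : ℕ} {u : Fin m → Fin k} {v : Fin n → Fin k} {x : Pt k}
    (h : x ∈ cylinder X (Fin.append u v)) : x ∈ cylinder X u := by
  refine ⟨h.1, fun i => ?_⟩
  have := h.2 (Fin.castAdd n i)
  rwa [Fin.coe_castAdd, Fin.append_left] at this

lemma append_cyl_right (hX : IsSubshift X) {m n : ℕ} {u : Fin m → Fin k}
    {v : Fin n → Fin k} {x : Pt k} (h : x ∈ cylinder X (Fin.append u v)) :
    shift^[m] x ∈ cylinder X v := by
  refine ⟨shift_iter_mem hX h.1 m, fun j => ?_⟩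
  have := h.2 (Fin.natAdd m j)
  rw [Fin.coe_natAdd, Fin.append_right] at this
  rw [shift_iter, ← this]
  congr 1; omega

lemma mem_cyl_append {m n : ℕ} {u : Fin m → Fin k} {v : Fin n → Fin k} {x : Pt k}
    (hx : x ∈ X) (h1 : ∀ i : Fin m, x i = u i) (h2 : ∀ j : Fin n, x (m + j) = v j) :
    x ∈ cylinder X (Fin.append u v) := by
  refine ⟨hx, fun j => ?_⟩
  refine Fin.addCases (fun i => ?_) (fun i => ?_) j
  · rw [Fin.coe_castAdd, Fin.append_left]; exact h1 i
  · rw [Fin.coe_natAdd, Fin.append_right]; exact h2 i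

lemma bv_le {M : ℝ} (hf : GoodSeq X f) (hM : BddVarWith X f M) {n : ℕ}
    {u : Fin n → Fin k} {x y : Pt k} (hx : x ∈ cylinder X u) (hy : y ∈ cylinder X u) :
    f n x ≤ M * f n y := by
  have hfy : 0 < f n y := (hf n).2 y hy.1
  have := hM.2 n x hx.1 y hy.1 (fun i hi => by rw [hx.2 ⟨i, hi⟩, hy.2 ⟨i, hi⟩])
  calc f n x = (f n x / f n y) * f n y := by field_simp
    _ ≤ M * f n y := mul_le_mul_of_nonneg_right this hfy.le

lemma sSup_le_bv {M : ℝ} (hf : GoodSeq X f) (hM : BddVarWith X f M) {n : ℕ}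
    {u : Fin n → Fin k} {x : Pt k} (hx : x ∈ cylinder X u) :
    sSup (f n '' cylinder X u) ≤ M * f n x :=
  Real.sSup_le (fun _ ⟨y, hy, hyx⟩ => hyx ▸ bv_le hf hM hy hx)
    (le_trans (by nlinarith [(hf n).2 x hx.1, hM.1]) (le_refl _))

lemma le_sSup_bv {M : ℝ} (hf : GoodSeq X f) (hM : BddVarWith X f M) {n : ℕ}
    {u : Fin n → Fin k} {x : Pt k} (hx : x ∈ cylinder X u) :
    f n x ≤ sSup (f n '' cylinder X u) :=
  le_csSup ⟨M * f n x, fun _ ⟨y, hy, hyx⟩ => hyx ▸ bv_le hf hM hy hx⟩ ⟨x, hx, rfl⟩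

lemma sum_comp_le {α β : Type*} [DecidableEq β] (S : Finset α) (T : Finset β)
    (g : α → β) (hg : ∀ a ∈ S, g a ∈ T) (N : ℕ)
    (hN : ∀ b ∈ T, (S.filter (fun a => g a = b)).card ≤ N)
    (F : β → ℝ) (hF : ∀ b ∈ T, 0 ≤ F b) :
    ∑ a ∈ S, F (g a) ≤ (N : ℝ) * ∑ b ∈ T, F b := by
  calc ∑ a ∈ S, F (g a)
      = ∑ b ∈ T, ∑ a ∈ S.filter (fun a => g a = b), F (g a) :=
        (Finset.sum_fiberwise_of_maps_to hg _).symm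
    _ ≤ ∑ b ∈ T, (N : ℝ) * F b := by
        refine Finset.sum_le_sum fun b hb => ?_
        have he : ∑ a ∈ S.filter (fun a => g a = b), F (g a)
            = (S.filter (fun a => g a = b)).card • F b := by
          rw [Finset.sum_congr rfl fun a ha => by rw [(Finset.mem_filter.mp ha).2],
            Finset.sum_const]
        rw [he, nsmul_eq_mul]
        exact mul_le_mul_of_nonneg_right (by exact_mod_cast hN b hb) (hF b hb)
    _ = (N : ℝ) * ∑ b ∈ T, F b := (Finset.mul_sum _ _ _).symm

lemma arith_chain {D a M E T fy fb p q : ℝ} (hE : 0 ≤ E) (hM0 : 0 ≤ M)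
    (h1 : D * a ≤ M * fb) (h2 : fb ≤ E * (p * q)) (h3 : p * q ≤ (M * fy) * T) :
    D * a ≤ (M * M * E * T) * fy := by
  nlinarith [mul_le_mul_of_nonneg_left h2 hM0,
    mul_le_mul_of_nonneg_left h3 (mul_nonneg hM0 hE)]

end Helpers

set_option maxHeartbeats 1000000 in
/-- a subadditive quasi-multiplicative sequence with bounded variation
is balanced. -/
theorem stmt8 {k : ℕ} (X : Set (Pt k)) (f : ℕ → Pt k → ℝ)
    (hX : IsSubshift X) (hf : GoodSeq X f)
    (hsub : Subadditive X f) (hbv : BddVar X f) (hqm : QuasiMult X f) :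
    Balanced X f := by
  by_cases hne : X.Nonempty
  swap
  · refine ⟨⟨1, le_refl 1, 1, le_refl 1, ?_⟩, ⟨1, le_refl 1, 1, le_refl 1, ?_⟩⟩ <;>
    · intro m n hm hn u hu
      obtain ⟨-, x, hx⟩ := Finset.mem_filter.mp hu
      exact absurd ⟨x, hx.1⟩ hne
  obtain ⟨x₀, hx₀⟩ := hne
  obtain ⟨C₀, hC₀, hsubadd⟩ := hsub
  obtain ⟨M, hM⟩ := hbv
  obtain ⟨k₀, D, hD0, hD1, hqm'⟩ := hqm
  set E := Real.exp C₀ with hE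
  have hEpos : 0 < E := Real.exp_pos _
  have hE1 : 1 ≤ E := Real.one_le_exp hC₀
  have hM1 : 1 ≤ M := hM.1
  have hMpos : 0 < M := by linarith
  obtain ⟨T, hT1, hT⟩ : ∃ T : ℝ, 1 ≤ T ∧ ∀ i ≤ k₀, ∀ x ∈ X, f i x ≤ T := by
    have hcomp : IsCompact X := hX.1.isCompact
    have key : ∀ i : ℕ, ∃ Ti : ℝ, ∀ x ∈ X, f i x ≤ Ti := fun i => by
      obtain ⟨xm, -, hxm⟩ := hcomp.exists_isMaxOn ⟨x₀, hx₀⟩ (hf i).1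
      exact ⟨f i xm, hxm⟩
    choose g hg using key
    have hsum0 : 0 ≤ ∑ i ∈ Finset.range (k₀ + 1), |g i| :=
      Finset.sum_nonneg fun _ _ => abs_nonneg _
    refine ⟨1 + ∑ i ∈ Finset.range (k₀ + 1), |g i|, by linarith, fun i hi x hx => ?_⟩
    calc f i x ≤ g i := hg i x hx
      _ ≤ |g i| := le_abs_self _
      _ ≤ ∑ j ∈ Finset.range (k₀ + 1), |g j| := by
          have hmem : i ∈ Finset.range (k₀ + 1) := Finset.mem_range.mpr (Nat.lt_succ_of_le hi)
          exact Finset.single_le_sum (f := fun j => |g j|) (fun j _ => abs_nonneg (g j)) hmem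
      _ ≤ 1 + ∑ j ∈ Finset.range (k₀ + 1), |g j| := by linarith
  have hTpos : 0 < T := by linarith
  have hkpos : 0 < k := (x₀ 0).pos
  set N : ℕ := (k₀ + 1) * k ^ k₀ with hNdef
  have hNpos : (0 : ℝ) < N := by
    have : 0 < N := Nat.mul_pos (Nat.succ_pos _) (pow_pos hkpos k₀)
    exact_mod_cast this
  set A : ℝ := E * M * M with hA
  have hApos : 0 < A := by rw [hA]; exact mul_pos (mul_pos hEpos hMpos) hMpos
  have hA1 : 1 ≤ A := by
    rw [hA]
    nlinarith [mul_le_mul hE1 hM1 zero_le_one (by linarith : (0:ℝ) ≤ E)]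
  set B : ℝ := (M * M * E * T) * N / D with hB
  have hKpos : 0 < M * M * E * T := mul_pos (mul_pos (mul_pos hMpos hMpos) hEpos) hTpos
  have hBpos : 0 < B := div_pos (mul_pos hKpos hNpos) hD0
  set Cc : ℝ := A + B with hCc
  have hC1 : 1 ≤ Cc := by rw [hCc]; linarith
  refine ⟨⟨Cc, hC1, k₀ + 1, by omega, ?_⟩, ⟨Cc, hC1, k₀ + 1, by omega, ?_⟩⟩
  -- RIGHT balanced
  · intro m n hm hn u hu xu hxu y hy z hz
    have hu' : Allowable X u := (Finset.mem_filter.mp hu).2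
    have hxuX : xu ∈ X := hxu.1
    have hfmxu : 0 < f m xu := (hf m).2 xu hxuX
    have hw₀ : (fun i : Fin n => x₀ (i : ℕ)) ∈ words X n :=
      Finset.mem_filter.mpr ⟨Finset.mem_univ _, ⟨x₀, hx₀, fun i => rfl⟩⟩
    have hzsum : 0 < ∑ w ∈ words X n, f n (z w) :=
      Finset.sum_pos' (fun w hw => ((hf n).2 _ (hz w hw).1).le)
        ⟨_, hw₀, (hf n).2 _ (hz _ hw₀).1⟩
    set d : ℝ := f m xu * ∑ w ∈ words X n, f n (z w) with hd
    have hdpos : 0 < d := mul_pos hfmxu hzsum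
    have hFsub : Fext X u n ⊆ words X n := by
      intro v hv
      obtain ⟨-, p, hp⟩ := Finset.mem_filter.mp hv
      exact Finset.mem_filter.mpr ⟨Finset.mem_univ _, ⟨shift^[m] p, append_cyl_right hX hp⟩⟩
    have hupper : ∑ v ∈ Fext X u n, f (m + n) (y v) ≤ A * d := by
      have hterm : ∀ v ∈ Fext X u n,
          f (m + n) (y v) ≤ E * M * M * (f m xu * f n (z v)) := by
        intro v hv
        have hyv := hy v hv
        have h1 := hsubadd (y v) hyv.1 m n
        have h2 : f m (y v) ≤ M * f m xu := bv_le hf hM (append_cyl_left hyv) hxu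
        have h3 : f n (shift^[m] (y v)) ≤ M * f n (z v) :=
          bv_le hf hM (append_cyl_right hX hyv) (hz v (hFsub hv))
        have p1 : 0 < f m (y v) := (hf m).2 _ hyv.1
        have p2 : 0 < f n (shift^[m] (y v)) := (hf n).2 _ (shift_iter_mem hX hyv.1 m)
        have p3 : 0 < f n (z v) := (hf n).2 _ (hz v (hFsub hv)).1
        have key : f m (y v) * f n (shift^[m] (y v)) ≤ (M * f m xu) * (M * f n (z v)) :=
          mul_le_mul h2 h3 p2.le (by nlinarith)
        nlinarith [mul_le_mul_of_nonneg_left key hEpos.le]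
      calc ∑ v ∈ Fext X u n, f (m + n) (y v)
          ≤ ∑ v ∈ Fext X u n, E * M * M * (f m xu * f n (z v)) := Finset.sum_le_sum hterm
        _ ≤ ∑ v ∈ words X n, E * M * M * (f m xu * f n (z v)) :=
            Finset.sum_le_sum_of_subset_of_nonneg hFsub fun w hw _ =>
              le_of_lt (mul_pos (mul_pos (mul_pos hEpos hMpos) hMpos)
                (mul_pos hfmxu ((hf n).2 _ (hz w hw).1)))
        _ = A * d := by simp only [← mul_assoc]; rw [← Finset.mul_sum, hA, hd]; ring
    -- lower bound via quasi-multiplicativity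
    have hH : ∀ w : Fin n → Fin k, ∃ (i : ℕ) (ω : Fin i → Fin k) (p : Pt k),
        i ≤ k₀ ∧ (w ∈ words X n → p ∈ cylinder X (Fin.append (Fin.append u ω) w) ∧
          D * (f m xu * f n (z w)) ≤ M * f (m + i + n) p) := by
      intro w
      by_cases hw : w ∈ words X n
      · have hw' : Allowable X w := (Finset.mem_filter.mp hw).2
        obtain ⟨i, hik, ω, hallow, hsup⟩ := hqm' m n u w hu' hw'
        obtain ⟨p, hp⟩ := hallow
        refine ⟨i, ω, p, hik, fun _ => ⟨hp, ?_⟩⟩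
        have s1 : f m xu ≤ sSup (f m '' cylinder X u) := le_sSup_bv hf hM hxu
        have s2 : f n (z w) ≤ sSup (f n '' cylinder X w) := le_sSup_bv hf hM (hz w hw)
        have s3 : sSup (f (m + i + n) '' cylinder X (Fin.append (Fin.append u ω) w))
            ≤ M * f (m + i + n) p := sSup_le_bv hf hM hp
        have p3 : 0 < f n (z w) := (hf n).2 _ (hz w hw).1
        have key : f m xu * f n (z w)
            ≤ sSup (f m '' cylinder X u) * sSup (f n '' cylinder X w) :=
          mul_le_mul s1 s2 p3.le (le_trans hfmxu.le s1)
        have step1 := mul_le_mul_of_nonneg_left key hD0.le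
        have step2 : D * (sSup (f m '' cylinder X u) * sSup (f n '' cylinder X w))
            = D * sSup (f m '' cylinder X u) * sSup (f n '' cylinder X w) :=
          (mul_assoc _ _ _).symm
        linarith
      · exact ⟨0, Fin.elim0, x₀, Nat.zero_le _, fun hw' => absurd hw' hw⟩
    choose iw ωw pw hik hmain using hH
    set gmap : (Fin n → Fin k) → (Fin n → Fin k) :=
      fun w j => pw w (m + (j : ℕ)) with hgmap
    have hcylg : ∀ w ∈ words X n, pw w ∈ cylinder X (Fin.append u (gmap w)) := by
      intro w hw
      have hp := (hmain w hw).1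
      exact mem_cyl_append hp.1
        (fun i => (append_cyl_left (append_cyl_left hp)).2 i) (fun j => rfl)
    have hgFext : ∀ w ∈ words X n, gmap w ∈ Fext X u n := fun w hw =>
      Finset.mem_filter.mpr ⟨Finset.mem_univ _, ⟨pw w, hcylg w hw⟩⟩
    have hrel : ∀ w ∈ words X n, ∀ l : ℕ, ∀ hln : l < n, ∀ hl : l + iw w < n,
        w ⟨l, hln⟩ = gmap w ⟨l + iw w, hl⟩ := by
      intro w hw l hln hl
      have hp := (hmain w hw).1
      have h5 := hp.2 (Fin.natAdd (m + iw w) ⟨l, hln⟩)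
      rw [Fin.append_right] at h5
      rw [← h5]
      exact congrArg (pw w) (by simp [Fin.coe_natAdd]; omega)
    have hlow : ∀ w ∈ words X n,
        D * (f m xu * f n (z w)) ≤ (M * M * E * T) * f (m + n) (y (gmap w)) := by
      intro w hw
      have hp := (hmain w hw).1
      have h1 := (hmain w hw).2
      have h2 : f (m + iw w + n) (pw w)
          ≤ E * (f (m + n) (pw w) * f (iw w) (shift^[m + n] (pw w))) := by
        rw [Nat.add_right_comm m (iw w) n]
        exact hsubadd (pw w) hp.1 (m + n) (iw w)
      have h3 : f (m + n) (pw w) ≤ M * f (m + n) (y (gmap w)) :=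
        bv_le hf hM (hcylg w hw) (hy _ (hgFext w hw))
      have h4 : f (iw w) (shift^[m + n] (pw w)) ≤ T :=
        hT _ (hik w) _ (shift_iter_mem hX hp.1 _)
      have p1 : 0 < f (iw w) (shift^[m + n] (pw w)) :=
        (hf _).2 _ (shift_iter_mem hX hp.1 _)
      have p2 : 0 < f (m + n) (y (gmap w)) := (hf _).2 _ (hy _ (hgFext w hw)).1
      exact arith_chain hEpos.le hMpos.le h1 h2 (mul_le_mul h3 h4 p1.le (by nlinarith))
    have hsum1 : D * d ≤ (M * M * E * T) * ∑ w ∈ words X n, f (m + n) (y (gmap w)) := by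
      rw [hd, ← mul_assoc, Finset.mul_sum, Finset.mul_sum]
      refine Finset.sum_le_sum fun w hw => ?_
      calc D * f m xu * f n (z w) = D * (f m xu * f n (z w)) := by ring
        _ ≤ (M * M * E * T) * f (m + n) (y (gmap w)) := hlow w hw
    have hfiber : ∀ b ∈ Fext X u n,
        ((words X n).filter fun w => gmap w = b).card ≤ N := by
      intro b _
      have hk₀n : k₀ < n := by omega
      have hlt : ∀ t : Fin k₀, n - k₀ + (t : ℕ) < n := fun t => by
        have := t.isLt; omega
      have hcard : ((words X n).filter fun w => gmap w = b).card ≤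
          ((Finset.range (k₀ + 1)) ×ˢ (Finset.univ : Finset (Fin k₀ → Fin k))).card := by
        refine Finset.card_le_card_of_injOn
          (fun w => (iw w, fun t : Fin k₀ => w ⟨n - k₀ + (t : ℕ), hlt t⟩))
          (fun w _ => Finset.mem_product.mpr
            ⟨Finset.mem_range.mpr (Nat.lt_succ_of_le (hik w)), Finset.mem_univ _⟩) ?_
        intro w hwf w' hwf' he
        obtain ⟨hw, hgw⟩ := Finset.mem_filter.mp (Finset.mem_coe.mp hwf)
        obtain ⟨hw', hgw'⟩ := Finset.mem_filter.mp (Finset.mem_coe.mp hwf')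
        have e1 : iw w = iw w' := congrArg Prod.fst he
        have e2 : (fun t : Fin k₀ => w ⟨n - k₀ + (t : ℕ), hlt t⟩)
            = (fun t : Fin k₀ => w' ⟨n - k₀ + (t : ℕ), hlt t⟩) := congrArg Prod.snd he
        funext l
        by_cases hl : (l : ℕ) + iw w < n
        · have r1 := hrel w hw l l.isLt hl
          have hl' : (l : ℕ) + iw w' < n := by rw [← e1]; exact hl
          have r2 := hrel w' hw' l l.isLt hl'
          have key : w ⟨(l : ℕ), l.isLt⟩ = w' ⟨(l : ℕ), l.isLt⟩ := by
            rw [r1, r2, hgw, hgw']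
            exact congrArg b (Fin.ext (by simp [e1]))
          simpa using key
        · have hge : n - k₀ ≤ (l : ℕ) := by have := hik w; omega
          have ht : (l : ℕ) - (n - k₀) < k₀ := by have := l.isLt; omega
          have e3 := congrFun e2 ⟨(l : ℕ) - (n - k₀), ht⟩
          have hval : (l : ℕ) = n - k₀ + ((l : ℕ) - (n - k₀)) := by omega
          have hidx : l = (⟨n - k₀ + ((l : ℕ) - (n - k₀)), hlt ⟨(l : ℕ) - (n - k₀), ht⟩⟩ : Fin n) :=
            Fin.ext hval
          rw [hidx]
          exact e3
      rwa [Finset.card_product, Finset.card_range, Finset.card_univ, Fintype.card_fun,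
        Fintype.card_fin, Fintype.card_fin] at hcard
    have hsum2 : ∑ w ∈ words X n, f (m + n) (y (gmap w))
        ≤ (N : ℝ) * ∑ v ∈ Fext X u n, f (m + n) (y v) :=
      sum_comp_le _ _ _ hgFext N hfiber _ (fun v hv => ((hf _).2 _ (hy v hv).1).le)
    have hlower : d ≤ B * ∑ v ∈ Fext X u n, f (m + n) (y v) := by
      have hch := hsum1.trans (mul_le_mul_of_nonneg_left hsum2 hKpos.le)
      rw [hB, div_mul_eq_mul_div, le_div_iff₀ hD0]
      nlinarith
    have hNum : 0 < ∑ v ∈ Fext X u n, f (m + n) (y v) := by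
      nlinarith
    constructor
    · calc 1 / Cc ≤ 1 / B := one_div_le_one_div_of_le hBpos (by rw [hCc]; linarith)
        _ ≤ (∑ v ∈ Fext X u n, f (m + n) (y v)) / d := by
            rw [div_le_div_iff₀ hBpos hdpos]; nlinarith
    · calc (∑ v ∈ Fext X u n, f (m + n) (y v)) / d ≤ A := by
            rw [div_le_iff₀ hdpos]; exact hupper
        _ ≤ Cc := by rw [hCc]; linarith
  -- LEFT balanced
  · intro m n hm hn u hu xu hxu y hy z hz
    have hu' : Allowable X u := (Finset.mem_filter.mp hu).2
    have hxuX : xu ∈ X := hxu.1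
    have hfmxu : 0 < f m xu := (hf m).2 xu hxuX
    have hw₀ : (fun i : Fin n => x₀ (i : ℕ)) ∈ words X n :=
      Finset.mem_filter.mpr ⟨Finset.mem_univ _, ⟨x₀, hx₀, fun i => rfl⟩⟩
    have hzsum : 0 < ∑ w ∈ words X n, f n (z w) :=
      Finset.sum_pos' (fun w hw => ((hf n).2 _ (hz w hw).1).le)
        ⟨_, hw₀, (hf n).2 _ (hz _ hw₀).1⟩
    set d : ℝ := f m xu * ∑ w ∈ words X n, f n (z w) with hd
    have hdpos : 0 < d := mul_pos hfmxu hzsum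
    have hPsub : Pext X u n ⊆ words X n := by
      intro v hv
      obtain ⟨-, p, hp⟩ := Finset.mem_filter.mp hv
      exact Finset.mem_filter.mpr ⟨Finset.mem_univ _, ⟨p, append_cyl_left hp⟩⟩
    have hupper : ∑ v ∈ Pext X u n, f (n + m) (y v) ≤ A * d := by
      have hterm : ∀ v ∈ Pext X u n,
          f (n + m) (y v) ≤ E * M * M * (f m xu * f n (z v)) := by
        intro v hv
        have hyv := hy v hv
        have h1 := hsubadd (y v) hyv.1 n m
        have h2 : f n (y v) ≤ M * f n (z v) :=
          bv_le hf hM (append_cyl_left hyv) (hz v (hPsub hv))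
        have h3 : f m (shift^[n] (y v)) ≤ M * f m xu :=
          bv_le hf hM (append_cyl_right hX hyv) hxu
        have p1 : 0 < f n (y v) := (hf n).2 _ hyv.1
        have p2 : 0 < f m (shift^[n] (y v)) := (hf m).2 _ (shift_iter_mem hX hyv.1 n)
        have p3 : 0 < f n (z v) := (hf n).2 _ (hz v (hPsub hv)).1
        have key : f n (y v) * f m (shift^[n] (y v)) ≤ (M * f n (z v)) * (M * f m xu) :=
          mul_le_mul h2 h3 p2.le (by nlinarith)
        nlinarith [mul_le_mul_of_nonneg_left key hEpos.le]
      calc ∑ v ∈ Pext X u n, f (n + m) (y v)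
          ≤ ∑ v ∈ Pext X u n, E * M * M * (f m xu * f n (z v)) := Finset.sum_le_sum hterm
        _ ≤ ∑ v ∈ words X n, E * M * M * (f m xu * f n (z v)) :=
            Finset.sum_le_sum_of_subset_of_nonneg hPsub fun w hw _ =>
              le_of_lt (mul_pos (mul_pos (mul_pos hEpos hMpos) hMpos)
                (mul_pos hfmxu ((hf n).2 _ (hz w hw).1)))
        _ = A * d := by simp only [← mul_assoc]; rw [← Finset.mul_sum, hA, hd]; ring
    have hH : ∀ w : Fin n → Fin k, ∃ (i : ℕ) (ω : Fin i → Fin k) (p : Pt k),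
        i ≤ k₀ ∧ (w ∈ words X n → p ∈ cylinder X (Fin.append (Fin.append w ω) u) ∧
          D * (f m xu * f n (z w)) ≤ M * f (n + i + m) p) := by
      intro w
      by_cases hw : w ∈ words X n
      · have hw' : Allowable X w := (Finset.mem_filter.mp hw).2
        obtain ⟨i, hik, ω, hallow, hsup⟩ := hqm' n m w u hw' hu'
        obtain ⟨p, hp⟩ := hallow
        refine ⟨i, ω, p, hik, fun _ => ⟨hp, ?_⟩⟩
        have s1 : f m xu ≤ sSup (f m '' cylinder X u) := le_sSup_bv hf hM hxu
        have s2 : f n (z w) ≤ sSup (f n '' cylinder X w) := le_sSup_bv hf hM (hz w hw)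
        have s3 : sSup (f (n + i + m) '' cylinder X (Fin.append (Fin.append w ω) u))
            ≤ M * f (n + i + m) p := sSup_le_bv hf hM hp
        have p3 : 0 < f n (z w) := (hf n).2 _ (hz w hw).1
        have key : f n (z w) * f m xu
            ≤ sSup (f n '' cylinder X w) * sSup (f m '' cylinder X u) :=
          mul_le_mul s2 s1 hfmxu.le (le_trans p3.le s2)
        have step0 : D * (f m xu * f n (z w)) = D * (f n (z w) * f m xu) := by ring
        have step1 := mul_le_mul_of_nonneg_left key hD0.le
        have step2 : D * (sSup (f n '' cylinder X w) * sSup (f m '' cylinder X u))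
            = D * sSup (f n '' cylinder X w) * sSup (f m '' cylinder X u) :=
          (mul_assoc _ _ _).symm
        linarith
      · exact ⟨0, Fin.elim0, x₀, Nat.zero_le _, fun hw' => absurd hw' hw⟩
    choose iw ωw pw hik hmain using hH
    set gmap : (Fin n → Fin k) → (Fin n → Fin k) :=
      fun w j => pw w (iw w + (j : ℕ)) with hgmap
    have hq : ∀ w ∈ words X n, shift^[iw w] (pw w) ∈ cylinder X (Fin.append (gmap w) u) := by
      intro w hw
      have hp := (hmain w hw).1
      refine mem_cyl_append (shift_iter_mem hX hp.1 _) (fun j => ?_) (fun j => ?_)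
      · rw [shift_iter]
        simp only [hgmap]
        exact congrArg (pw w) (Nat.add_comm _ _)
      · rw [shift_iter]
        have h5 := hp.2 (Fin.natAdd (n + iw w) j)
        rw [Fin.append_right] at h5
        rw [← h5]
        exact congrArg (pw w) (by simp [Fin.coe_natAdd]; omega)
    have hgPext : ∀ w ∈ words X n, gmap w ∈ Pext X u n := fun w hw =>
      Finset.mem_filter.mpr ⟨Finset.mem_univ _, ⟨shift^[iw w] (pw w), hq w hw⟩⟩
    have hrel : ∀ w ∈ words X n, ∀ l : ℕ, ∀ hln : l < n, iw w ≤ l →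
        w ⟨l, hln⟩ = gmap w ⟨l - iw w, Nat.lt_of_le_of_lt (Nat.sub_le l (iw w)) hln⟩ := by
      intro w hw l hln hge
      have hp := (hmain w hw).1
      have h5 := hp.2 (Fin.castAdd m (Fin.castAdd (iw w) ⟨l, hln⟩))
      rw [Fin.append_left, Fin.append_left] at h5
      simp only [hgmap]
      rw [← h5]
      exact congrArg (pw w) (by simp [Fin.coe_castAdd]; omega)
    have hlow : ∀ w ∈ words X n,
        D * (f m xu * f n (z w)) ≤ (M * M * E * T) * f (n + m) (y (gmap w)) := by
      intro w hw
      have hp := (hmain w hw).1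
      have h1 := (hmain w hw).2
      have h2 : f (n + iw w + m) (pw w)
          ≤ E * (f (iw w) (pw w) * f (n + m) (shift^[iw w] (pw w))) := by
        have hidx : n + iw w + m = iw w + (n + m) := by omega
        rw [hidx]
        exact hsubadd (pw w) hp.1 (iw w) (n + m)
      have h3 : f (n + m) (shift^[iw w] (pw w)) ≤ M * f (n + m) (y (gmap w)) :=
        bv_le hf hM (hq w hw) (hy _ (hgPext w hw))
      have h4 : f (iw w) (pw w) ≤ T := hT _ (hik w) _ hp.1
      have p1 : 0 < f (n + m) (shift^[iw w] (pw w)) :=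
        (hf _).2 _ (shift_iter_mem hX hp.1 _)
      have p2 : 0 < f (n + m) (y (gmap w)) := (hf _).2 _ (hy _ (hgPext w hw)).1
      refine arith_chain hEpos.le hMpos.le h1 h2 ?_
      have hc := mul_le_mul h4 h3 p1.le hTpos.le
      have hcomm : T * (M * f (n + m) (y (gmap w)))
          = (M * f (n + m) (y (gmap w))) * T := mul_comm _ _
      linarith
    have hsum1 : D * d ≤ (M * M * E * T) * ∑ w ∈ words X n, f (n + m) (y (gmap w)) := by
      rw [hd, ← mul_assoc, Finset.mul_sum, Finset.mul_sum]
      refine Finset.sum_le_sum fun w hw => ?_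
      calc D * f m xu * f n (z w) = D * (f m xu * f n (z w)) := by ring
        _ ≤ (M * M * E * T) * f (n + m) (y (gmap w)) := hlow w hw
    have hfiber : ∀ b ∈ Pext X u n,
        ((words X n).filter fun w => gmap w = b).card ≤ N := by
      intro b _
      have hk₀n : k₀ < n := by omega
      have hlt : ∀ t : Fin k₀, (t : ℕ) < n := fun t => by
        have := t.isLt; omega
      have hcard : ((words X n).filter fun w => gmap w = b).card ≤
          ((Finset.range (k₀ + 1)) ×ˢ (Finset.univ : Finset (Fin k₀ → Fin k))).card := by
        refine Finset.card_le_card_of_injOn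
          (fun w => (iw w, fun t : Fin k₀ => w ⟨(t : ℕ), hlt t⟩))
          (fun w _ => Finset.mem_product.mpr
            ⟨Finset.mem_range.mpr (Nat.lt_succ_of_le (hik w)), Finset.mem_univ _⟩) ?_
        intro w hwf w' hwf' he
        obtain ⟨hw, hgw⟩ := Finset.mem_filter.mp (Finset.mem_coe.mp hwf)
        obtain ⟨hw', hgw'⟩ := Finset.mem_filter.mp (Finset.mem_coe.mp hwf')
        have e1 : iw w = iw w' := congrArg Prod.fst he
        have e2 : (fun t : Fin k₀ => w ⟨(t : ℕ), hlt t⟩)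
            = (fun t : Fin k₀ => w' ⟨(t : ℕ), hlt t⟩) := congrArg Prod.snd he
        funext l
        by_cases hl : iw w ≤ (l : ℕ)
        · have r1 := hrel w hw l l.isLt hl
          have hl' : iw w' ≤ (l : ℕ) := by rw [← e1]; exact hl
          have r2 := hrel w' hw' l l.isLt hl'
          have key : w ⟨(l : ℕ), l.isLt⟩ = w' ⟨(l : ℕ), l.isLt⟩ := by
            rw [r1, r2, hgw, hgw']
            exact congrArg b (Fin.ext (by simp [e1]))
          simpa using key
        · have ht : (l : ℕ) < k₀ := lt_of_lt_of_le (not_le.mp hl) (hik w)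
          have e3 := congrFun e2 ⟨(l : ℕ), ht⟩
          simpa using e3
      rwa [Finset.card_product, Finset.card_range, Finset.card_univ, Fintype.card_fun,
        Fintype.card_fin, Fintype.card_fin] at hcard
    have hsum2 : ∑ w ∈ words X n, f (n + m) (y (gmap w))
        ≤ (N : ℝ) * ∑ v ∈ Pext X u n, f (n + m) (y v) :=
      sum_comp_le _ _ _ hgPext N hfiber _ (fun v hv => ((hf _).2 _ (hy v hv).1).le)
    have hlower : d ≤ B * ∑ v ∈ Pext X u n, f (n + m) (y v) := by
      have hch := hsum1.trans (mul_le_mul_of_nonneg_left hsum2 hKpos.le)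
      rw [hB, div_mul_eq_mul_div, le_div_iff₀ hD0]
      nlinarith
    have hNum : 0 < ∑ v ∈ Pext X u n, f (n + m) (y v) := by
      nlinarith
    constructor
    · calc 1 / Cc ≤ 1 / B := one_div_le_one_div_of_le hBpos (by rw [hCc]; linarith)
        _ ≤ (∑ v ∈ Pext X u n, f (n + m) (y v)) / d := by
            rw [div_le_div_iff₀ hBpos hdpos]; nlinarith
    · calc (∑ v ∈ Pext X u n, f (n + m) (y v)) / d ≤ A := by
            rw [div_le_iff₀ hdpos]; exact hupper
        _ ≤ Cc := by rw [hCc]; linarith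

end Paper
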